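/- Let P, P' : H → O be functions on a finite nonempty set H such that for every probability distribution p on H, the Shannon entropy of the pushforward of p along P is at most that along P'. Then the number of equivalence classes of the kernel relation ≃_P is at most the number of equivalence classes of ≃_{P'}. -/

import Mathlib

/-!
Let `n` and `m` be the numbers of classes of `≃_P` and `≃_{P'}`. The distribution giving each
class of `≃_P` mass `1 / n`, spread uniformly inside the class, pushes forward along `P` to the
uniform distribution on `n` points, of entropy `log n`. Any pushforward along `P'` is supported
on the `m` points of the range of `P'`, so by Jensen's inequality for the concave `x ↦ -x log x`
its entropy is at most `log m`. Hence `log n ≤ log m`.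
-/

open Real Finset

theorem sum_negMulLog_le_log_card {ι : Type*} {s : Finset ι} {q : ι → ℝ}
    (hq : ∀ i ∈ s, 0 ≤ q i) (hsum : ∑ i ∈ s, q i = 1) :
    ∑ i ∈ s, negMulLog (q i) ≤ log #s := by
  have hs : (0 : ℝ) < #s := by
    have : s.Nonempty := nonempty_of_sum_ne_zero (by rw [hsum]; exact one_ne_zero)
    exact_mod_cast this.card_pos
  have jensen := concaveOn_negMulLog.le_map_sum (t := s) (w := fun _ => (#s : ℝ)⁻¹)
    (p := fun i => #s * q i) (fun _ _ => by positivity)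
    (by rw [sum_const, nsmul_eq_mul, mul_inv_cancel₀ hs.ne'])
    (fun i hi => Set.mem_Ici.mpr (mul_nonneg hs.le (hq i hi)))
  have hmean : ∑ i ∈ s, (#s : ℝ)⁻¹ • ((#s : ℝ) * q i) = 1 := by
    simp only [smul_eq_mul, ← mul_assoc, inv_mul_cancel₀ hs.ne', one_mul, hsum]
  have hterm : ∀ i ∈ s,
      (#s : ℝ)⁻¹ • negMulLog (#s * q i) = negMulLog (q i) - q i * log #s := by
    intro i _
    rw [negMulLog_mul, smul_eq_mul, negMulLog]
    field_simp
    ring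
  rw [hmean, negMulLog_one, sum_congr rfl hterm, sum_sub_distrib, ← sum_mul, hsum, one_mul,
    sub_nonpos] at jensen
  exact jensen

theorem neg_sum_mul_logb {ι : Type*} (s : Finset ι) (q : ι → ℝ) (b : ℝ) :
    -(∑ i ∈ s, q i * logb b (q i)) = (∑ i ∈ s, negMulLog (q i)) / log b := by
  simp only [negMulLog, logb, sum_div, ← sum_neg_distrib]
  exact sum_congr rfl fun i _ => by ring

section Pushforward

variable {H O : Type*} [Fintype H] [DecidableEq O]

def pushforward (f : H → O) (p : H → ℝ) (o : O) : ℝ :=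
  ∑ h with f h = o, p h

theorem pushforward_nonneg (f : H → O) {p : H → ℝ} (hp : ∀ h, 0 ≤ p h) (o : O) :
    0 ≤ pushforward f p o :=
  sum_nonneg fun h _ => hp h

theorem pushforward_eq_zero_of_notMem (f : H → O) (p : H → ℝ) {o : O}
    (ho : o ∉ univ.image f) :
    pushforward f p o = 0 := by
  refine sum_eq_zero fun h hh => absurd ?_ ho
  exact mem_image.mpr ⟨h, mem_univ h, (mem_filter.mp hh).2⟩

theorem sum_image_pushforward (f : H → O) (p : H → ℝ) :
    ∑ o ∈ univ.image f, pushforward f p o = ∑ h, p h :=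
  sum_fiberwise_of_maps_to (fun h _ => mem_image_of_mem f (mem_univ h)) p

noncomputable def classUniform (f : H → O) (h : H) : ℝ :=
  ((#(univ.image f) : ℝ) * #{h' | f h' = f h})⁻¹

theorem classUniform_nonneg (f : H → O) (h : H) : 0 ≤ classUniform f h := by
  unfold classUniform; positivity

theorem pushforward_classUniform (f : H → O) {o : O} (ho : o ∈ univ.image f) :
    pushforward f (classUniform f) o = (#(univ.image f) : ℝ)⁻¹ := by
  obtain ⟨h₀, -, rfl⟩ := mem_image.mp ho
  have hfiber : (0 : ℝ) < #{h | f h = f h₀} :=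
    Nat.cast_pos.mpr (card_pos.mpr ⟨h₀, by simp⟩)
  have hconst : ∀ h ∈ ({h | f h = f h₀} : Finset H),
      classUniform f h = ((#(univ.image f) : ℝ) * #{h | f h = f h₀})⁻¹ := by
    intro h hh
    rw [classUniform, (mem_filter.mp hh).2]
  rw [pushforward, sum_congr rfl hconst, sum_const, nsmul_eq_mul, mul_inv, mul_left_comm,
    mul_inv_cancel₀ hfiber.ne', mul_one]

theorem sum_classUniform [Nonempty H] (f : H → O) : ∑ h, classUniform f h = 1 := by
  have hn : (#(univ.image f) : ℝ) ≠ 0 := by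
    exact_mod_cast (univ_nonempty.image f).card_pos.ne'
  rw [← sum_image_pushforward f, sum_congr rfl fun _ => pushforward_classUniform f, sum_const,
    nsmul_eq_mul, mul_inv_cancel₀ hn]

variable [Fintype O]

theorem sum_negMulLog_pushforward_eq_sum_image (f : H → O) (p : H → ℝ) :
    ∑ o, negMulLog (pushforward f p o) = ∑ o ∈ univ.image f, negMulLog (pushforward f p o) :=
  (sum_subset (subset_univ _) fun o _ ho => by
    rw [pushforward_eq_zero_of_notMem f p ho, negMulLog_zero]).symm

theorem sum_negMulLog_pushforward_le_log_card (f : H → O) {p : H → ℝ} (hp : ∀ h, 0 ≤ p h)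
    (hsum : ∑ h, p h = 1) :
    ∑ o, negMulLog (pushforward f p o) ≤ log #(univ.image f) :=
  sum_negMulLog_pushforward_eq_sum_image f p ▸
    sum_negMulLog_le_log_card (fun o _ => pushforward_nonneg f hp o)
      ((sum_image_pushforward f p).trans hsum)

theorem sum_negMulLog_pushforward_classUniform [Nonempty H] (f : H → O) :
    ∑ o, negMulLog (pushforward f (classUniform f) o) = log #(univ.image f) := by
  have hn : (#(univ.image f) : ℝ) ≠ 0 := by
    exact_mod_cast (univ_nonempty.image f).card_pos.ne'
  rw [sum_negMulLog_pushforward_eq_sum_image,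
    sum_congr rfl fun _ ho => by rw [pushforward_classUniform f ho], sum_const, nsmul_eq_mul,
    negMulLog, log_inv]
  field_simp

end Pushforward

theorem classes_le_of_entropy_le_general {H O : Type} [Fintype H]
    [Fintype O] [DecidableEq O] (P P' : H → O)
    (hent : ∀ p : H → ℝ, (∀ h, 0 ≤ p h) → ∑ h, p h = 1 →
      -(∑ o, (∑ h ∈ Finset.univ.filter (fun h => P h = o), p h) *
          Real.logb 2 (∑ h ∈ Finset.univ.filter (fun h => P h = o), p h))
        ≤
      -(∑ o, (∑ h ∈ Finset.univ.filter (fun h => P' h = o), p h) *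
          Real.logb 2 (∑ h ∈ Finset.univ.filter (fun h => P' h = o), p h))) :
    Fintype.card (Set.range P) ≤ Fintype.card (Set.range P') := by
  obtain hH | hH := isEmpty_or_nonempty H
  · simp
  have hentropy := hent _ (classUniform_nonneg P) (sum_classUniform P)
  rw [neg_sum_mul_logb, neg_sum_mul_logb, div_le_div_iff_of_pos_right (log_pos one_lt_two)]
    at hentropy
  have hlog : log #(univ.image P) ≤ log #(univ.image P') :=
    sum_negMulLog_pushforward_classUniform P ▸ hentropy.trans <|
      sum_negMulLog_pushforward_le_log_card P' (classUniform_nonneg P) (sum_classUniform P)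
  rw [← Set.toFinset_card, ← Set.toFinset_card, Set.toFinset_range, Set.toFinset_range]
  exact_mod_cast (log_le_log_iff (by simp) (by simp)).mp hlog

/-- If for every distribution on `H` the entropy of the pushforward along `P`
is at most that along `P'`, then the number of equivalence classes of the
kernel relation of `P` is at most that of `P'`. -/
theorem classes_le_of_entropy_le {H O : Type} [Fintype H] [Nonempty H]
    [Fintype O] [DecidableEq O] (P P' : H → O)
    (hent : ∀ p : H → ℝ, (∀ h, 0 ≤ p h) → ∑ h, p h = 1 →
      -(∑ o, (∑ h ∈ Finset.univ.filter (fun h => P h = o), p h) *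
          Real.logb 2 (∑ h ∈ Finset.univ.filter (fun h => P h = o), p h))
        ≤
      -(∑ o, (∑ h ∈ Finset.univ.filter (fun h => P' h = o), p h) *
          Real.logb 2 (∑ h ∈ Finset.univ.filter (fun h => P' h = o), p h))) :
    Fintype.card (Set.range P) ≤ Fintype.card (Set.range P') :=
  classes_le_of_entropy_le_general P P' hent
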